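/- arXiv:2202.08299 — 3 statements merged into one kernel-verified Lean document; each statement's English description precedes it below -/
import Mathlib

section
/- There exists $N_0$ such that for all natural numbers $n \ge N_0$ the following holds. Let $k = 1/\sqrt{n}$, let $b, \sigma, \epsilon$ be reals with $0 < b \le 1/(\log n)^2$, $0 \le \sigma \le 1/(\log n)^3$ and $|\epsilon| \le \sigma$. Define $G_0(w_0, w_1) = \frac{1-k}{1+\exp(-w_0 - w_1(b+\epsilon))} - \frac{k}{1+\exp(w_0)}$ and $G_1(w_0, w_1) = \frac{(1-k)\, b}{1+\exp(-w_0 - w_1(b+\epsilon))}$. Then for all $w_0, w_1 \in \mathbb{R}$ with $m := \max(|w_0|, |w_1|) \le (\log n)/4 - 4$, one has $G_1(w_0, w_1) < b$ and $G_0(w_0, w_1) > \exp(-2m)/8$. -/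
/-!
The hypothesis `m ≤ (log n)/4 - 4` makes the weight `k = 1/√n` of the small subset at most
`exp (-(2m + 8))`, and, since `b + |ε| ≤ 2/(log n)^2`, it keeps the perturbation `w₁(b + ε)` of the
big subset's logit below `1/32`. The sigmoid of that logit is then at least
`exp (-(m + 1/32))/2 ≥ (31/64) exp (-2m)`, which beats the small subset's contribution
`k/(1 + exp w₀) ≤ exp (-2m)/9` by more than `exp (-2m)/8`. The bound on `G₁` only uses that the
sigmoid is below `1`.
-/

open Real

theorem one_div_sqrt_le_exp_neg {x a : ℝ} (h : a ≤ log x / 2) : 1 / √x ≤ exp (-a) := by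
  rcases le_or_gt x 0 with hx | hx
  · rw [sqrt_eq_zero'.mpr hx, div_zero]
    exact (exp_pos _).le
  · have hsqrt : √x = exp (log x / 2) := by
      rw [← log_sqrt hx.le, exp_log (sqrt_pos.mpr hx)]
    rw [hsqrt, one_div, ← exp_neg]
    exact exp_le_exp.mpr (by linarith)

theorem exp_neg_div_two_le_one_div_one_add_exp {z c : ℝ} (hc : 0 ≤ c) (hz : z ≤ c) :
    exp (-c) / 2 ≤ 1 / (1 + exp z) := by
  have hden : 1 + exp z ≤ 2 * exp c := by
    linarith [one_le_exp hc, exp_le_exp.mpr hz]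
  calc exp (-c) / 2 = 1 / (2 * exp c) := by rw [exp_neg]; field_simp
    _ ≤ 1 / (1 + exp z) := one_div_le_one_div_of_le (by positivity) hden

theorem mul_div_one_add_exp_lt {k b : ℝ} (z : ℝ) (hk : 0 ≤ k) (hb : 0 < b) :
    (1 - k) * b / (1 + exp z) < b := by
  rw [div_lt_iff₀ (by positivity)]
  nlinarith [exp_pos z]

theorem abs_mul_add_le {L w b ε : ℝ} (hL : 16 ≤ L) (hw : |w| ≤ L / 4) (hb : |b| ≤ 1 / L ^ 2)
    (hε : |ε| ≤ 1 / L ^ 3) : |w * (b + ε)| ≤ 1 / 32 := by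
  have hL3 : 1 / L ^ 3 ≤ 1 / L ^ 2 :=
    one_div_le_one_div_of_le (by positivity) (by nlinarith)
  calc |w * (b + ε)| = |w| * |b + ε| := abs_mul _ _
    _ ≤ L / 4 * (2 / L ^ 2) := by
        gcongr
        linarith [abs_add_le b ε, show 2 / L ^ 2 = 1 / L ^ 2 + 1 / L ^ 2 by ring]
    _ = 1 / (2 * L) := by field_simp; ring
    _ ≤ 1 / 32 := one_div_le_one_div_of_le (by norm_num) (by linarith)

theorem exp_neg_eight_le : exp (-8) ≤ 1 / 9 := by
  rw [exp_neg, one_div]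
  exact inv_anti₀ (by norm_num) (by linarith [add_one_le_exp 8])

/-- Paper's Lemma 1: for large enough `n`, with `k = 1/√n`,
`0 < b ≤ 1/(log n)^2`, `0 ≤ σ ≤ 1/(log n)^3`, `|ε| ≤ σ`, and class-averaged
gradients `G0, G1` of the logistic cross-entropy loss, for all weights with
`m := max |w0| |w1| ≤ (log n)/4 - 4` one has `G1 < b` and `G0 > exp (-2m)/8`. -/
theorem gradient_bounds :
    ∃ N0 : ℕ, ∀ n : ℕ, N0 ≤ n →
      ∀ b σ ε : ℝ, 0 < b → b ≤ 1 / (Real.log n) ^ 2 →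
        0 ≤ σ → σ ≤ 1 / (Real.log n) ^ 3 → |ε| ≤ σ →
        ∀ w0 w1 : ℝ, max |w0| |w1| ≤ Real.log n / 4 - 4 →
          (1 - 1 / Real.sqrt n) * b / (1 + Real.exp (-w0 - w1 * (b + ε))) < b ∧
          (1 - 1 / Real.sqrt n) / (1 + Real.exp (-w0 - w1 * (b + ε))) -
              (1 / Real.sqrt n) / (1 + Real.exp w0)
            > Real.exp (-(2 * max |w0| |w1|)) / 8 := by
  refine ⟨0, fun n _ b σ ε hb hbL _ hσL hε w0 w1 hw => ?_⟩
  set m := max |w0| |w1|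
  set k := 1 / √(n : ℝ)
  set z := -w0 - w1 * (b + ε)
  set A := exp (-(2 * m))
  have hm : 0 ≤ m := (abs_nonneg w0).trans (le_max_left _ _)
  have hk : k ≤ A * exp (-8) :=
    calc k ≤ exp (-(2 * m + 8)) := one_div_sqrt_le_exp_neg (by linarith)
      _ = A * exp (-8) := by rw [← exp_add]; ring_nf
  have hz : z ≤ m + 1 / 32 := by
    have := abs_mul_add_le (w := w1) (by linarith) (by linarith [le_max_right |w0| |w1|])
      (by rwa [abs_of_pos hb]) (hε.trans hσL)
    linarith [neg_le_abs w0, le_max_left |w0| |w1|, neg_le_abs (w1 * (b + ε))]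
  have hsigmoid : A * (31 / 64) ≤ 1 / (1 + exp z) :=
    calc A * (31 / 64) ≤ A * exp (-(1 / 32)) / 2 := by
          rw [mul_div_assoc]
          exact mul_le_mul_of_nonneg_left (by linarith [add_one_le_exp (-(1 / 32))]) (exp_pos _).le
      _ = exp (-(2 * m + 1 / 32)) / 2 := by rw [← exp_add]; ring_nf
      _ ≤ exp (-(m + 1 / 32)) / 2 := by gcongr; linarith
      _ ≤ 1 / (1 + exp z) := exp_neg_div_two_le_one_div_one_add_exp (by positivity) hz
  have hk0 : 0 ≤ k := by positivity
  refine ⟨mul_div_one_add_exp_lt z hk0 hb, ?_⟩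
  have hsmall : k / (1 + exp w0) ≤ k := div_le_self hk0 (by linarith [exp_pos w0])
  have hA : A ≤ 1 := exp_le_one_iff.mpr (by linarith)
  have hk9 : k ≤ A / 9 :=
    hk.trans (by simpa [div_eq_mul_one_div A] using
      mul_le_mul_of_nonneg_left exp_neg_eight_le (exp_pos (-(2 * m))).le)
  rw [div_eq_mul_one_div (1 - k)]
  nlinarith [exp_pos (-(2 * m))]
end

section
/- There exists $N_0$ such that for all natural numbers $n \ge N_0$ the following holds. Let $k = 1/\sqrt{n}$, let $b, \sigma, \epsilon$ be reals with $0 < b \le 1/(\log n)^2$, $0 \le \sigma \le 1/(\log n)^3$ and $|\epsilon| \le \sigma$. Define $G_0(w_0, w_1) = \frac{1-k}{1+\exp(-w_0 - w_1(b+\epsilon))} - \frac{k}{1+\exp(w_0)}$ and $G_1(w_0, w_1) = \frac{(1-k)\, b}{1+\exp(-w_0 - w_1(b+\epsilon))}$, and consider the sequences $w_0^{(t+1)} = w_0^{(t)} + G_0(w_0^{(t)}, w_1^{(t)})$, $w_1^{(t+1)} = w_1^{(t)} + G_1(w_0^{(t)}, w_1^{(t)})$. If $|w_0^{(0)}| <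 1$ and $1/\log n \le |w_1^{(0)}| < 1$, then there exists a natural number $t \le 1500$ with $w_0^{(t)} \ge 2$. -/
set_option maxHeartbeats 1000000 in
/-- First part of the paper's Theorem 1: for large enough `n`, with `k = 1/√n`,
`0 < b ≤ 1/(log n)^2`, `0 ≤ σ ≤ 1/(log n)^3`, `|ε| ≤ σ`, gradient-descent
iterates `w0, w1` driven by the class-averaged gradients `G0, G1`, initialized
with `|w0 0| < 1` and `1/log n ≤ |w1 0| < 1`, reach `w0 t ≥ 2` within `t ≤ 1500`
iterations. -/
theorem w0_reaches_two :
    ∃ N0 : ℕ, ∀ n : ℕ, N0 ≤ n →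
      ∀ b σ ε : ℝ, 0 < b → b ≤ 1 / (Real.log n) ^ 2 →
        0 ≤ σ → σ ≤ 1 / (Real.log n) ^ 3 → |ε| ≤ σ →
        ∀ w0 w1 : ℕ → ℝ,
          (∀ t : ℕ, w0 (t + 1) = w0 t +
              ((1 - 1 / Real.sqrt n) / (1 + Real.exp (-w0 t - w1 t * (b + ε))) -
                (1 / Real.sqrt n) / (1 + Real.exp (w0 t)))) →
          (∀ t : ℕ, w1 (t + 1) = w1 t +
              (1 - 1 / Real.sqrt n) * b / (1 + Real.exp (-w0 t - w1 t * (b + ε)))) →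
          |w0 0| < 1 → 1 / Real.log n ≤ |w1 0| → |w1 0| < 1 →
          ∃ t : ℕ, t ≤ 1500 ∧ w0 t ≥ 2 := by
  refine ⟨10 ^ 20, fun n hn b σ ε hb hble hσ0 hσle hεσ w0 w1 hrec0 hrec1 hw00 _ hw10 => ?_⟩
  have hn' : (10:ℝ) ^ 20 ≤ (n : ℝ) := by exact_mod_cast Nat.cast_le.mpr hn
  have hn0 : (0:ℝ) < (n : ℝ) := by positivity
  -- log n ≥ 40
  have hlog : (40:ℝ) ≤ Real.log n := by
    rw [Real.le_log_iff_exp_le hn0]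
    calc Real.exp 40 = Real.exp 1 ^ 40 := by rw [Real.exp_one_pow]; norm_num
      _ ≤ (2.7182818286 : ℝ) ^ 40 :=
          pow_le_pow_left₀ (Real.exp_pos 1).le Real.exp_one_lt_d9.le 40
      _ ≤ (10:ℝ) ^ 20 := by norm_num
      _ ≤ (n : ℝ) := hn'
  have hlogpos : (0:ℝ) < Real.log n := by linarith
  -- b ≤ 1/1600
  have hb1 : b ≤ 1 / 1600 := by
    refine hble.trans ?_
    have h2 : (1600:ℝ) ≤ (Real.log n) ^ 2 := by nlinarith
    exact one_div_le_one_div_of_le (by norm_num) h2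
  -- |ε| ≤ 1/64000
  have hε1 : |ε| ≤ 1 / 64000 := by
    refine hεσ.trans (hσle.trans ?_)
    have h3 : (64000:ℝ) ≤ (Real.log n) ^ 3 := by nlinarith
    exact one_div_le_one_div_of_le (by norm_num) h3
  -- k = 1/√n ≤ 1/100
  have hsq : (100:ℝ) ≤ Real.sqrt n := by
    have := Real.sqrt_le_sqrt (show ((10:ℝ)^4) ≤ (n:ℝ) by nlinarith)
    rwa [show ((10:ℝ)^4) = 100^2 by norm_num, Real.sqrt_sq (by norm_num)] at this
  have hkpos : 0 < 1 / Real.sqrt n := by positivity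
  have hk : 1 / Real.sqrt n ≤ 1 / 100 := one_div_le_one_div_of_le (by norm_num) hsq
  set k := 1 / Real.sqrt n with hkdef
  have hw00' := abs_lt.mp hw00
  have hw10' := abs_nonneg (w1 0)
  by_contra hcon
  push_neg at hcon
  -- main invariant: while w0 < 2 it grows by at least 1/10 per step, and w1 drifts slowly
  have key : ∀ t : ℕ, t ≤ 30 → w0 0 + t / 10 ≤ w0 t ∧ |w1 t| ≤ |w1 0| + t * b := by
    intro t
    induction t with
    | zero => intro _; simp
    | succ t ih =>
      intro ht
      obtain ⟨h0, h1⟩ := ih (by omega)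
      have htr : (t : ℝ) ≤ 30 := by exact_mod_cast Nat.le_of_succ_le ht
      have htr0 : (0:ℝ) ≤ (t : ℝ) := Nat.cast_nonneg t
      have hw0lt : w0 t < 2 := hcon t (by omega)
      have hw0lb : -1 < w0 t := by nlinarith
      have hw1b : |w1 t| ≤ 102 / 100 := by nlinarith
      -- bound the exponent
      have habs : |w1 t * (b + ε)| ≤ 1 := by
        rw [abs_mul]
        have hbe : |b + ε| ≤ 1 / 1600 + 1 / 64000 := by
          calc |b + ε| ≤ |b| + |ε| := abs_add_le b ε
            _ ≤ 1 / 1600 + 1 / 64000 := by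
                rw [abs_of_pos hb]; exact add_le_add hb1 hε1
        calc |w1 t| * |b + ε| ≤ (102/100) * (1/1600 + 1/64000) := by
              exact mul_le_mul hw1b hbe (abs_nonneg _) (by norm_num)
          _ ≤ 1 := by norm_num
      have hE : -w0 t - w1 t * (b + ε) ≤ 2 := by
        have := neg_abs_le (w1 t * (b + ε))
        linarith
      have hexp : Real.exp (-w0 t - w1 t * (b + ε)) ≤ 739 / 100 := by
        calc Real.exp (-w0 t - w1 t * (b + ε)) ≤ Real.exp 2 := Real.exp_le_exp.mpr hE
          _ = Real.exp 1 ^ 2 := by rw [Real.exp_one_pow]; norm_num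
          _ ≤ (2.7182818286 : ℝ) ^ 2 :=
              pow_le_pow_left₀ (Real.exp_pos 1).le Real.exp_one_lt_d9.le 2
          _ ≤ 739 / 100 := by norm_num
      have hden : (0:ℝ) < 1 + Real.exp (-w0 t - w1 t * (b + ε)) := by positivity
      constructor
      · -- w0 step
        have hfirst : (99/100 : ℝ) / (839/100) ≤
            (1 - k) / (1 + Real.exp (-w0 t - w1 t * (b + ε))) := by
          apply div_le_div₀ (by linarith) (by linarith) hden (by linarith)
        have hsecond : k / (1 + Real.exp (w0 t)) ≤ k := by
          apply div_le_self hkpos.le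
          linarith [Real.exp_pos (w0 t)]
        rw [hrec0 t]
        push_cast
        linarith
      · -- w1 step
        have hc0 : 0 ≤ (1 - k) * b / (1 + Real.exp (-w0 t - w1 t * (b + ε))) :=
          div_nonneg (mul_nonneg (by linarith) hb.le) hden.le
        have hcb : (1 - k) * b / (1 + Real.exp (-w0 t - w1 t * (b + ε))) ≤ b := by
          calc (1 - k) * b / (1 + Real.exp (-w0 t - w1 t * (b + ε))) ≤ (1 - k) * b := by
                apply div_le_self (mul_nonneg (by linarith) hb.le)
                linarith [Real.exp_pos (-w0 t - w1 t * (b + ε))]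
            _ ≤ b := by nlinarith
        rw [hrec1 t]
        push_cast
        calc |w1 t + (1 - k) * b / (1 + Real.exp (-w0 t - w1 t * (b + ε)))|
            ≤ |w1 t| + |(1 - k) * b / (1 + Real.exp (-w0 t - w1 t * (b + ε)))| := abs_add_le _ _
          _ = |w1 t| + (1 - k) * b / (1 + Real.exp (-w0 t - w1 t * (b + ε))) := by
              rw [abs_of_nonneg hc0]
          _ ≤ |w1 0| + (t + 1) * b := by nlinarith
  have h30 := (key 30 le_rfl).1
  have hlt := hcon 30 (by norm_num)
  push_cast at h30
  linarith
end

section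
/- Let $(w^{(s)})_{s \ge 0}$ be a real sequence with $w^{(0)} \ge -1$ such that for every $s$, $0 \le w^{(s+1)} - w^{(s)} \le 1$ and $w^{(s+1)} - w^{(s)} \ge \exp(-2 w^{(s+1)} - 2)/8$. Then for every natural number $t \ge 1$, $w^{(t)} \ge (\log t)/2 - 7$. -/
/-- Growth step in the proof of the paper's Theorem 2: if `w 0 ≥ -1`, each
increment lies in `[0, 1]` and is at least `exp (-2 * w (s+1) - 2) / 8`, then
for every `t ≥ 1` one has `w t ≥ (log t)/2 - 7`. -/
theorem logarithmic_growth (w : ℕ → ℝ) (h0 : w 0 ≥ -1)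
    (hbound : ∀ s : ℕ, 0 ≤ w (s + 1) - w s ∧ w (s + 1) - w s ≤ 1)
    (hlow : ∀ s : ℕ, w (s + 1) - w s ≥ Real.exp (-2 * w (s + 1) - 2) / 8) :
    ∀ t : ℕ, 1 ≤ t → w t ≥ Real.log t / 2 - 7 := by
  have key : ∀ t : ℕ, Real.exp (2 * w t) ≥ t * (Real.exp (-4) / 4) := by
    intro t
    induction t with
    | zero => simp; positivity
    | succ n ih =>
      have hΔ := (hbound n).1
      have hΔ1 := (hbound n).2
      have hl := hlow n
      -- exp(2 w(n+1)) - exp(2 w n) ≥ 2 exp(2 w n) * Δ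
      have h1 : Real.exp (2 * w (n + 1)) ≥
          Real.exp (2 * w n) * (1 + 2 * (w (n + 1) - w n)) := by
        have : Real.exp (2 * w (n + 1)) =
            Real.exp (2 * w n) * Real.exp (2 * (w (n + 1) - w n)) := by
          rw [← Real.exp_add]; ring_nf
        rw [this]
        have := Real.add_one_le_exp (2 * (w (n + 1) - w n))
        nlinarith [Real.exp_pos (2 * w n)]
      have h2 : Real.exp (2 * w n) ≥ Real.exp (2 * w (n + 1) - 2) := by
        apply Real.exp_le_exp.mpr; linarith
      have h3 : Real.exp (2 * w (n + 1) - 2) * (w (n + 1) - w n) ≥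
          Real.exp (2 * w (n + 1) - 2) * (Real.exp (-2 * w (n + 1) - 2) / 8) := by
        apply mul_le_mul_of_nonneg_left hl (Real.exp_pos _).le
      have h4 : Real.exp (2 * w (n + 1) - 2) * (Real.exp (-2 * w (n + 1) - 2) / 8)
          = Real.exp (-4) / 8 := by
        rw [← mul_div_assoc, ← Real.exp_add]
        congr 1
        ring
      have h5 : Real.exp (2 * w (n + 1)) ≥ Real.exp (2 * w n) + Real.exp (-4) / 4 := by
        nlinarith [Real.exp_pos (2 * w n), Real.exp_pos (2 * w (n+1) - 2)]
      have : (n : ℝ) + 1 = ((n + 1 : ℕ) : ℝ) := by push_cast; ring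
      nlinarith [Real.exp_pos (-4 : ℝ)]
  intro t ht
  have hk := key t
  have htpos : (0 : ℝ) < t := by exact_mod_cast ht
  have hpos : (0 : ℝ) < t * (Real.exp (-4) / 4) := by positivity
  have hlog : Real.log (t * (Real.exp (-4) / 4)) ≤ 2 * w t := by
    calc Real.log (t * (Real.exp (-4) / 4)) ≤ Real.log (Real.exp (2 * w t)) :=
          Real.log_le_log hpos hk
      _ = 2 * w t := Real.log_exp _
  have hexpand : Real.log (t * (Real.exp (-4) / 4)) =
      Real.log t + (-4) - Real.log 4 := by
    rw [Real.log_mul (ne_of_gt htpos) (by positivity), Real.log_div (Real.exp_ne_zero _) (by norm_num),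
      Real.log_exp]; ring
  have hlog4 : Real.log 4 ≤ 2 := by
    have h22 : Real.exp 2 = Real.exp 1 * Real.exp 1 := by
      rw [← Real.exp_add]; norm_num
    have : (4 : ℝ) ≤ Real.exp 2 := by
      nlinarith [Real.exp_one_gt_d9]
    calc Real.log 4 ≤ Real.log (Real.exp 2) := Real.log_le_log (by norm_num) this
      _ = 2 := Real.log_exp _
  linarith [hlog, hexpand ▸ hlog]
end
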